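/- Fix an integer n ≥ 1 and set c = 1 + 1/log T. For T sufficiently large, |∫_{1}^{T} (ζ'/ζ)(c + it) · ζ^{(n)}(c + it) dt| ≪ log^{n+3} T. -/

import Mathlib

/-!
For `Re s > 1` we have `ζ'/ζ · ζ⁽ⁿ⁾ = (-1)ⁿ⁺¹ L(Λ, s) L(logⁿ, s)`, and on the line `Re s = c` the
product of these absolutely convergent Dirichlet series is the absolutely convergent double series
`∑ Λ(m) logⁿ k (mk)^(-c) (mk)^(-it)`. Since `Λ(1) = 0`, every frequency `log (mk)` that occurs is at
least `log 2`, so integrating term by term over an interval of any length costs at most `2 / log 2`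
times the size of each coefficient. What remains is `∑ Λ(m) m^(-c) · ∑ logⁿ k · k^(-c)`;
writing `c = 1 + d`, the bound `logʲ k ≤ (2j/d)ʲ k^(d/2)` makes these sums `≪ d⁻²` and
`≪ d^-(n+1)`, which for `d = 1 / log T` is `log^(n+3) T`.
-/

open Complex MeasureTheory Set LSeries ArithmeticFunction
open scoped LSeries.notation

theorem tsum_nat_rpow_neg_one_add_le {ε : ℝ} (hε : 0 < ε) :
    ∑' k : ℕ, (k : ℝ) ^ (-(1 + ε)) ≤ 1 + 1 / ε := by
  have hexp : -(1 + ε) < -1 := by linarith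
  have anti : AntitoneOn (fun x : ℝ ↦ x ^ (-(1 + ε))) (Ici ((1 : ℕ) : ℝ)) :=
    fun x hx y _ hxy ↦
      Real.rpow_le_rpow_of_nonpos (zero_lt_one.trans_le (by simpa using hx)) hxy (by linarith)
  have tail := anti.tsum_comp_add_le_integral 1
    (by simpa using integrableOn_Ioi_rpow_of_lt hexp one_pos)
    (fun x hx ↦ Real.rpow_nonneg (zero_le_one.trans (le_of_lt (by simpa using hx))) _)
  have head : ∑ k ∈ Finset.range 2, (k : ℝ) ^ (-(1 + ε)) = 1 := by
    rw [Finset.sum_range_succ, Finset.sum_range_one, Nat.cast_zero, Nat.cast_one,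
      Real.zero_rpow (by linarith), Real.one_rpow, zero_add]
  have integral : ∫ x in Ioi ((1 : ℕ) : ℝ), x ^ (-(1 + ε)) = 1 / ε := by
    rw [Nat.cast_one, integral_Ioi_rpow_of_lt hexp one_pos, Real.one_rpow,
      show -(1 + ε) + 1 = -ε by ring, neg_div_neg_eq]
  rw [← (Real.summable_nat_rpow.mpr hexp).sum_add_tsum_nat_add 2, head, ← integral]
  exact (add_le_add_iff_left 1).mpr tail

theorem log_pow_le_mul_rpow {x ε : ℝ} (hx : 1 ≤ x) (hε : 0 < ε) (j : ℕ) :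
    Real.log x ^ j ≤ (j / ε) ^ j * x ^ ε := by
  rcases j.eq_zero_or_pos with rfl | hj
  · simpa using Real.one_le_rpow hx hε.le
  have hεj : 0 < ε / j := by positivity
  calc Real.log x ^ j ≤ (x ^ (ε / j) / (ε / j)) ^ j := by
        gcongr
        · exact Real.log_nonneg hx
        · exact Real.log_le_rpow_div (by linarith) hεj
    _ = (j / ε) ^ j * x ^ ε := by
        rw [div_pow, ← Real.rpow_natCast, ← Real.rpow_mul (by linarith),
          div_mul_cancel₀ _ (by positivity), div_eq_mul_inv, ← inv_pow, inv_div, mul_comm]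

theorem log_pow_mul_rpow_le (j : ℕ) {d : ℝ} (hd : 0 < d) (k : ℕ) :
    Real.log k ^ j * (k : ℝ) ^ (-(1 + d)) ≤ (2 * j / d) ^ j * (k : ℝ) ^ (-(1 + d / 2)) := by
  rcases k.eq_zero_or_pos with rfl | hk
  · simp only [Nat.cast_zero, Real.zero_rpow (by linarith : -(1 + d) ≠ 0),
      Real.zero_rpow (by linarith : -(1 + d / 2) ≠ 0), mul_zero, le_refl]
  have hk1 : (1 : ℝ) ≤ k := by exact_mod_cast hk
  calc Real.log k ^ j * (k : ℝ) ^ (-(1 + d))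
      ≤ (j / (d / 2)) ^ j * (k : ℝ) ^ (d / 2) * (k : ℝ) ^ (-(1 + d)) := by
        gcongr
        exact log_pow_le_mul_rpow hk1 (by positivity) j
    _ = (2 * j / d) ^ j * (k : ℝ) ^ (-(1 + d / 2)) := by
        rw [mul_assoc, ← Real.rpow_add (by positivity), div_div_eq_mul_div, mul_comm (j : ℝ)]
        ring_nf

theorem summable_log_pow_mul_rpow (j : ℕ) {d : ℝ} (hd : 0 < d) :
    Summable fun k : ℕ ↦ Real.log k ^ j * (k : ℝ) ^ (-(1 + d)) :=
  .of_nonneg_of_le (fun k ↦ by positivity) (log_pow_mul_rpow_le j hd)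
    ((Real.summable_nat_rpow.mpr (by linarith)).mul_left _)

theorem tsum_log_pow_mul_rpow_le (j : ℕ) {d : ℝ} (hd : 0 < d) (hd1 : d ≤ 1) :
    ∑' k : ℕ, Real.log k ^ j * (k : ℝ) ^ (-(1 + d)) ≤ 3 * (2 * j) ^ j / d ^ (j + 1) := by
  calc ∑' k : ℕ, Real.log k ^ j * (k : ℝ) ^ (-(1 + d))
      ≤ ∑' k : ℕ, (2 * j / d) ^ j * (k : ℝ) ^ (-(1 + d / 2)) :=
        (summable_log_pow_mul_rpow j hd).tsum_le_tsum (log_pow_mul_rpow_le j hd)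
          ((Real.summable_nat_rpow.mpr (by linarith)).mul_left _)
    _ = (2 * j / d) ^ j * ∑' k : ℕ, (k : ℝ) ^ (-(1 + d / 2)) := tsum_mul_left
    _ ≤ (2 * j / d) ^ j * (1 + 1 / (d / 2)) := by
        gcongr
        exact tsum_nat_rpow_neg_one_add_le (by positivity)
    _ ≤ (2 * j / d) ^ j * (3 / d) := by
        gcongr
        rw [one_div_div, add_div' _ _ _ hd.ne']
        gcongr
        linarith
    _ = 3 * (2 * j) ^ j / d ^ (j + 1) := by
        rw [div_pow, pow_succ]
        field_simp

theorem logMul_iterate_one_apply (n k : ℕ) : logMul^[n] 1 k = Complex.log k ^ n := by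
  induction n with
  | zero => simp
  | succ n ih => rw [Function.iterate_succ_apply', logMul, ih, pow_succ, mul_comm]

theorem norm_logMul_iterate_one_apply (n k : ℕ) : ‖logMul^[n] 1 k‖ = Real.log k ^ n := by
  rw [logMul_iterate_one_apply, norm_pow, ← natCast_log, norm_real,
    Real.norm_of_nonneg (Real.log_natCast_nonneg k)]

section LogPowerBounded

variable {f : ℕ → ℂ} {j : ℕ} (hf : ∀ m, ‖f m‖ ≤ Real.log m ^ j)
include hf

theorem norm_term_le_log_pow_mul_rpow (s : ℂ) (m : ℕ) :
    ‖term f s m‖ ≤ Real.log m ^ j * (m : ℝ) ^ (-s.re) := by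
  rw [norm_term_eq]
  split_ifs with hm
  · positivity
  · rw [Real.rpow_neg (Nat.cast_nonneg m), ← div_eq_mul_inv]
    gcongr
    exact hf m

theorem summable_norm_term_of_norm_le_log_pow {s : ℂ} (hs : 1 < s.re) :
    Summable fun m ↦ ‖term f s m‖ :=
  .of_nonneg_of_le (fun _ ↦ norm_nonneg _)
    (fun m ↦ (norm_term_le_log_pow_mul_rpow hf s m).trans_eq (by ring_nf))
    (summable_log_pow_mul_rpow j (sub_pos.mpr hs))

theorem tsum_norm_term_le_of_norm_le_log_pow {d : ℝ} (hd : 0 < d) (hd1 : d ≤ 1) {s : ℂ}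
    (hs : s.re = 1 + d) :
    ∑' m, ‖term f s m‖ ≤ 3 * (2 * j) ^ j / d ^ (j + 1) :=
  ((summable_norm_term_of_norm_le_log_pow hf (by linarith)).tsum_le_tsum
    (fun m ↦ hs ▸ norm_term_le_log_pow_mul_rpow hf s m)
    (summable_log_pow_mul_rpow j hd)).trans (tsum_log_pow_mul_rpow_le j hd hd1)

end LogPowerBounded

theorem norm_integral_cexp_mul_I_le {ω : ℝ} (hω : ω ≠ 0) (a b : ℝ) :
    ‖∫ t in a..b, cexp (ω * t * I)‖ ≤ 2 / |ω| := by
  have hωI : (ω : ℂ) * I ≠ 0 := mul_ne_zero (ofReal_ne_zero.mpr hω) I_ne_zero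
  have hnorm : ∀ t : ℝ, ‖cexp (ω * I * t)‖ = 1 := fun t ↦ by
    rw [mul_right_comm, ← ofReal_mul, norm_exp_ofReal_mul_I]
  simp_rw [mul_right_comm _ _ I]
  rw [integral_exp_mul_complex hωI, norm_div, norm_mul, norm_I, mul_one, norm_real,
    Real.norm_eq_abs]
  gcongr
  exact (norm_sub_le _ _).trans (by rw [hnorm, hnorm]; norm_num)

theorem norm_integral_tsum_mul_cexp_le {ι : Type*} [Countable ι] {B : ι → ℂ} {ω : ι → ℝ}
    {r : ℝ} (hr : 0 < r) (hB : Summable fun i ↦ ‖B i‖) (hω : ∀ i, B i ≠ 0 → r ≤ |ω i|)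
    (a b : ℝ) :
    ‖∫ t in a..b, ∑' i, B i * cexp (ω i * t * I)‖ ≤ 2 / r * ∑' i, ‖B i‖ := by
  have hnorm : ∀ i (t : ℝ), ‖B i * cexp (ω i * t * I)‖ = ‖B i‖ := fun i t ↦ by
    rw [norm_mul, ← ofReal_mul, norm_exp_ofReal_mul_I, mul_one]
  have hsum : HasSum (fun i ↦ ∫ t in a..b, B i * cexp (ω i * t * I))
      (∫ t in a..b, ∑' i, B i * cexp (ω i * t * I)) :=
    intervalIntegral.hasSum_integral_of_dominated_convergence (fun i _ ↦ ‖B i‖)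
      (fun i ↦ (by fun_prop : Continuous fun t : ℝ ↦ B i * cexp (ω i * t * I)).aestronglyMeasurable)
      (fun i ↦ .of_forall fun t _ ↦ (hnorm i t).le) (.of_forall fun _ _ ↦ hB)
      intervalIntegrable_const
      (.of_forall fun t _ ↦ (Summable.of_norm (by simpa only [hnorm] using hB)).hasSum)
  refine hsum.norm_le_of_bounded (hB.hasSum.mul_left (2 / r)) fun i ↦ ?_
  rcases eq_or_ne (B i) 0 with hBi | hBi
  · simp [hBi]
  have hωi : ω i ≠ 0 := abs_pos.mp (hr.trans_le (hω i hBi))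
  rw [intervalIntegral.integral_const_mul, norm_mul, mul_comm]
  gcongr
  exact (norm_integral_cexp_mul_I_le hωi a b).trans (by gcongr; exact hω i hBi)

theorem term_ofReal_add_mul_I (f : ℕ → ℂ) (σ t : ℝ) (m : ℕ) :
    term f (σ + t * I) m = term f σ m * cexp (↑(-Real.log m) * t * I) := by
  rcases eq_or_ne m 0 with rfl | hm
  · simp
  have hm0 : (m : ℂ) ≠ 0 := Nat.cast_ne_zero.mpr hm
  rw [term_of_ne_zero hm, term_of_ne_zero hm, cpow_add _ _ hm0, ← div_div, div_eq_mul_inv (_ / _),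
    cpow_def_of_ne_zero hm0 (t * I), ← exp_neg, ← natCast_log]
  push_cast
  ring_nf

theorem LSeries_mul_LSeries_eq_tsum {f g : ℕ → ℂ} {σ : ℝ} (hf : LSeriesSummable f σ)
    (hg : LSeriesSummable g σ) (t : ℝ) :
    LSeries f (σ + t * I) * LSeries g (σ + t * I) =
      ∑' p : ℕ × ℕ, term f σ p.1 * term g σ p.2 *
        cexp (↑(-(Real.log p.1 + Real.log p.2)) * t * I) := by
  have hre : (σ : ℂ).re = (σ + t * I : ℂ).re := by simp
  rw [LSeries, LSeries, tsum_mul_tsum_of_summable_norm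
    ((LSeriesSummable_iff_of_re_eq_re hre).mp hf).norm
    ((LSeriesSummable_iff_of_re_eq_re hre).mp hg).norm]
  congr 1 with p
  rw [term_ofReal_add_mul_I, term_ofReal_add_mul_I, mul_mul_mul_comm, ← exp_add]
  push_cast
  ring_nf

theorem norm_integral_LSeries_mul_LSeries_le {f g : ℕ → ℂ} (hf₁ : f 1 = 0) {σ : ℝ}
    (hf : LSeriesSummable f σ) (hg : LSeriesSummable g σ) (a b : ℝ) :
    ‖∫ t in a..b, LSeries f (σ + t * I) * LSeries g (σ + t * I)‖ ≤
      2 / Real.log 2 * ((∑' m, ‖term f σ m‖) * ∑' k, ‖term g σ k‖) := by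
  simp_rw [LSeries_mul_LSeries_eq_tsum hf hg]
  have hF : Summable fun m ↦ ‖term f σ m‖ := hf.norm
  have hG : Summable fun k ↦ ‖term g σ k‖ := hg.norm
  have hFG : Summable fun p : ℕ × ℕ ↦ ‖term f σ p.1‖ * ‖term g σ p.2‖ :=
    hF.mul_of_nonneg hG (fun _ ↦ norm_nonneg _) (fun _ ↦ norm_nonneg _)
  rw [hF.tsum_mul_tsum hG hFG]
  refine (norm_integral_tsum_mul_cexp_le (Real.log_pos one_lt_two)
    (by simpa only [norm_mul] using hFG) (fun p hp ↦ ?_) a b).trans_eq (by simp only [norm_mul])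
  obtain ⟨m, k⟩ := p
  obtain ⟨hfm, -⟩ := mul_ne_zero_iff.mp hp
  have hm : 2 ≤ m := by
    by_contra! h
    interval_cases m
    · exact hfm (term_zero ..)
    · exact hfm (by simp [hf₁])
  rw [abs_neg, abs_of_nonneg (by positivity)]
  have := Real.log_le_log two_pos (by exact_mod_cast hm : (2 : ℝ) ≤ m)
  linarith [Real.log_natCast_nonneg k]

theorem norm_integral_LSeries_mul_LSeries_le_of_norm_le_log_pow {f g : ℕ → ℂ} {i j : ℕ}
    (hf₁ : f 1 = 0) (hf : ∀ m, ‖f m‖ ≤ Real.log m ^ i) (hg : ∀ k, ‖g k‖ ≤ Real.log k ^ j)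
    {d : ℝ} (hd : 0 < d) (hd1 : d ≤ 1) (a b : ℝ) :
    ‖∫ t in a..b, LSeries f (↑(1 + d) + t * I) * LSeries g (↑(1 + d) + t * I)‖ ≤
      2 / Real.log 2 * (3 * (2 * i) ^ i / d ^ (i + 1) * (3 * (2 * j) ^ j / d ^ (j + 1))) := by
  have hσ : (↑(1 + d) : ℂ).re = 1 + d := ofReal_re _
  have hσ1 : 1 < (↑(1 + d) : ℂ).re := by rw [hσ]; linarith
  refine (norm_integral_LSeries_mul_LSeries_le hf₁
    (.of_norm (summable_norm_term_of_norm_le_log_pow hf hσ1))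
    (.of_norm (summable_norm_term_of_norm_le_log_pow hg hσ1)) a b).trans ?_
  gcongr
  · exact tsum_norm_term_le_of_norm_le_log_pow hf hd hd1 hσ
  · exact tsum_norm_term_le_of_norm_le_log_pow hg hd hd1 hσ

theorem deriv_riemannZeta_div_mul_iteratedDeriv_eq {s : ℂ} (hs : 1 < s.re) (n : ℕ) :
    deriv riemannZeta s / riemannZeta s * iteratedDeriv n riemannZeta s =
      (-1) ^ (n + 1) * (LSeries ↗Λ s * LSeries (logMul^[n] 1) s) := by
  have hζ : iteratedDeriv n riemannZeta s = iteratedDeriv n (LSeries 1) s :=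
    (Filter.eventuallyEq_of_mem ((isOpen_lt continuous_const continuous_re).mem_nhds hs)
      fun w hw ↦ LSeries_one_eq_riemannZeta hw).iteratedDeriv_eq n |>.symm
  rw [hζ, LSeries_iteratedDeriv n (by rw [LSeries.abscissaOfAbsConv_one]; exact_mod_cast hs),
    LSeries_vonMangoldt_eq_deriv_riemannZeta_div hs]
  ring

theorem right_contour_bound_general (n : ℕ) :
    ∃ K > (0 : ℝ), ∃ T₀ : ℝ, ∀ T ≥ T₀, ∀ c : ℝ, c = 1 + 1 / Real.log T →
      ‖∫ t in (1 : ℝ)..T,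
          deriv riemannZeta (↑c + ↑t * I) / riemannZeta (↑c + ↑t * I) *
            iteratedDeriv n riemannZeta (↑c + ↑t * I)‖ ≤
        K * Real.log T ^ (n + 3) := by
  have hpow : 0 < (2 * n : ℝ) ^ n := by
    rcases n.eq_zero_or_pos with rfl | hn
    · simp
    · positivity
  refine ⟨2 / Real.log 2 * (18 * (2 * n) ^ n), by positivity, Real.exp 1, fun T hT c hc ↦ ?_⟩
  have hlogT : 1 ≤ Real.log T := (Real.le_log_iff_exp_le ((Real.exp_pos 1).trans_le hT)).mpr hT
  have hd : 0 < 1 / Real.log T := by positivity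
  have hΛ : ∀ m, ‖(↗Λ m : ℂ)‖ ≤ Real.log m ^ 1 := fun m ↦ by
    simpa [abs_of_nonneg vonMangoldt_nonneg] using vonMangoldt_le_log
  subst hc
  calc _ = ‖∫ t in (1 : ℝ)..T, LSeries ↗Λ (↑(1 + 1 / Real.log T) + t * I) *
          LSeries (logMul^[n] 1) (↑(1 + 1 / Real.log T) + t * I)‖ := by
        rw [intervalIntegral.integral_congr fun t _ ↦
          deriv_riemannZeta_div_mul_iteratedDeriv_eq (by simpa using hd) n,
          intervalIntegral.integral_const_mul, norm_mul]
        simp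
    _ ≤ _ := norm_integral_LSeries_mul_LSeries_le_of_norm_le_log_pow (by simp) hΛ
          (fun k ↦ (norm_logMul_iterate_one_apply n k).le) hd
          (div_le_one_of_le₀ hlogT (by positivity)) 1 T
    _ = _ := by
        rw [one_div, inv_pow, inv_pow, div_inv_eq_mul, div_inv_eq_mul]
        push_cast
        ring

/-- for `T` sufficiently large and `c = 1 + 1/log T`,
`|∫_1^T (ζ'/ζ)(c+it) ζ^{(n)}(c+it) dt| ≪ log^{n+3} T`. -/
theorem right_contour_bound (n : ℕ) (hn : 1 ≤ n) :
    ∃ K > (0 : ℝ), ∃ T₀ : ℝ, ∀ T ≥ T₀, ∀ c : ℝ, c = 1 + 1 / Real.log T →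
      ‖∫ t in (1 : ℝ)..T,
          deriv riemannZeta (↑c + ↑t * I) / riemannZeta (↑c + ↑t * I) *
            iteratedDeriv n riemannZeta (↑c + ↑t * I)‖ ≤
        K * Real.log T ^ (n + 3) :=
  right_contour_bound_general n
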